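/- arXiv:1908.05353 — 2 statements merged into one kernel-verified Lean document; each statement's English description precedes it below -/
import Mathlib

section
/- Let χ be a multiplicative character of F with conductor a = a(χ) ≥ 1, let m be an integer with 0 ≤ 2m ≤ a, and let ψ be a nontrivial additive character of F. Then there exists c ∈ F^× with v_F(c) = a(χ) + n(ψ) such that χ(1 + y) = ψ(y/c) for all y ∈ P_F^{a−m}. -/
noncomputable section

/-- `x ∈ P_L^i`, the `i`-th power of the maximal ideal of the discrete valuation `v`
(with the convention that `0` lies in every `P_L^i`). -/
def InP {L : Type*} [Field L] (v : L → ℤ) (i : ℤ) (x : L) : Prop :=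
  x = 0 ∨ i ≤ v x

/-- `x ∈ U_L^i`, the `i`-th higher unit group (`U_L^0 = O_L^×`, `U_L^i = 1 + P_L^i` for `i ≥ 1`). -/
def InU {L : Type*} [Field L] (v : L → ℤ) (i : ℕ) (x : L) : Prop :=
  x ≠ 0 ∧ v x = 0 ∧ (i = 0 ∨ InP v (i : ℤ) (x - 1))

/-- `v` is a normalized (surjective) discrete valuation on the field `L`. -/
structure IsDiscreteVal {L : Type*} [Field L] (v : L → ℤ) : Prop where
  map_mul : ∀ x y : L, x ≠ 0 → y ≠ 0 → v (x * y) = v x + v y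
  min_le_add : ∀ x y : L, x ≠ 0 → y ≠ 0 → x + y ≠ 0 → min (v x) (v y) ≤ v (x + y)
  exists_uniformizer : ∃ π : L, π ≠ 0 ∧ v π = 1

/-- `χ` is a multiplicative character of `L^×`, i.e. a homomorphism `L^× → ℂ^×`
that is trivial on some higher unit group. -/
structure IsMulChar {L : Type*} [Field L] (v : L → ℤ) (χ : L → ℂ) : Prop where
  map_one : χ 1 = 1
  map_mul : ∀ x y : L, x ≠ 0 → y ≠ 0 → χ (x * y) = χ x * χ y
  continuous : ∃ n : ℕ, ∀ x, InU v n x → χ x = 1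

/-- `χ` is a multiplicative character of `L^×` with conductor exactly `a`:
it is trivial on `U_L^a` and `a` is the least such index. -/
structure IsMulCharCond {L : Type*} [Field L] (v : L → ℤ) (χ : L → ℂ) (a : ℕ) : Prop where
  map_one : χ 1 = 1
  map_mul : ∀ x y : L, x ≠ 0 → y ≠ 0 → χ (x * y) = χ x * χ y
  triv : ∀ x, InU v a x → χ x = 1
  nontriv : ∀ b : ℕ, b < a → ∃ x, InU v b x ∧ χ x ≠ 1

/-- `ψ` is an additive character of `L`, i.e. a homomorphism `(L,+) → ℂ^×`. -/
structure IsAddChar {L : Type*} [Field L] (ψ : L → ℂ) : Prop where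
  map_zero : ψ 0 = 1
  map_add : ∀ x y : L, ψ (x + y) = ψ x * ψ y

/-- The additive character `ψ` has conductor `n`: it is trivial on `P_L^{-n}` but
nontrivial on `P_L^{-n-1}`. -/
def AddCondEq {L : Type*} [Field L] (v : L → ℤ) (ψ : L → ℂ) (n : ℤ) : Prop :=
  (∀ x, InP v (-n) x → ψ x = 1) ∧ ∃ x, InP v (-n - 1) x ∧ ψ x ≠ 1

/-- `q` is the cardinality of the residue field `O_L/P_L` of `(L, v)`. -/
def IsResidueCard {L : Type*} [Field L] (v : L → ℤ) (q : ℕ) : Prop :=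
  ∃ S : Finset L, S.card = q ∧ (∀ s ∈ S, InP v 0 s) ∧
    ∀ x : L, InP v 0 x → ∃! s, s ∈ S ∧ InP v 1 (x - s)

/-- `S` is a full set of coset representatives for `U_L^i / U_L^j` (where `i ≤ j`). -/
def IsMulReps {L : Type*} [Field L] (v : L → ℤ) (i j : ℕ) (S : Finset L) : Prop :=
  (∀ s ∈ S, InU v i s) ∧ ∀ x, InU v i x → ∃! s, s ∈ S ∧ InU v j (x * s⁻¹)

/-- `S` is a full set of coset representatives for the additive quotient `P_L^i / P_L^j`. -/
def IsAddReps {L : Type*} [Field L] (v : L → ℤ) (i j : ℤ) (S : Finset L) : Prop :=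
  (∀ s ∈ S, InP v i s) ∧ ∀ x, InP v i x → ∃! s, s ∈ S ∧ InP v j (x - s)

/-- `ω` is the quadratic character `ω_{K/F}` of `F^×` attached to the quadratic extension
`K/F` by class field theory: a multiplicative character that is nontrivial, of square one,
and trivial on the norm group `N_{K/F}(K^×)`. -/
structure IsOmega (F K : Type*) [Field F] [Field K] [Algebra F K]
    (vF : F → ℤ) (ω : F → ℂ) : Prop where
  map_one : ω 1 = 1
  map_mul : ∀ x y : F, x ≠ 0 → y ≠ 0 → ω (x * y) = ω x * ω y
  continuous : ∃ n : ℕ, ∀ x, InU vF n x → ω x = 1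
  nontrivial : ∃ x : F, x ≠ 0 ∧ ω x ≠ 1
  sq_one : ∀ x : F, x ≠ 0 → ω x * ω x = 1
  norm_trivial : ∀ y : K, y ≠ 0 → ω (Algebra.norm F y) = 1

section Basic
variable {F : Type*} [Field F] {vF : F → ℤ} (hv : IsDiscreteVal vF)
include hv

lemma v_one : vF 1 = 0 := by
  have := hv.map_mul 1 1 one_ne_zero one_ne_zero
  simp at this; omega

lemma v_neg {x : F} (hx : x ≠ 0) : vF (-x) = vF x := by
  have h1 : vF ((-1 : F) * (-1)) = vF (-1) + vF (-1) :=
    hv.map_mul _ _ (by norm_num) (by norm_num)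
  have h2 : ((-1 : F) * (-1)) = 1 := by ring
  rw [h2, v_one hv] at h1
  have h3 : -x = (-1 : F) * x := by ring
  rw [h3, hv.map_mul _ _ (by norm_num) hx]; omega

lemma v_inv {x : F} (hx : x ≠ 0) : vF x⁻¹ = - vF x := by
  have := hv.map_mul x x⁻¹ hx (inv_ne_zero hx)
  rw [mul_inv_cancel₀ hx, v_one hv] at this; omega

lemma exists_val (k : ℤ) : ∃ c : F, c ≠ 0 ∧ vF c = k := by
  obtain ⟨π, hπ0, hπ1⟩ := hv.exists_uniformizer
  have hpow : ∀ j : ℕ, π ^ j ≠ 0 ∧ vF (π ^ j) = j := by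
    intro j; induction j with
    | zero => simpa using v_one hv
    | succ i ih =>
      constructor
      · exact pow_ne_zero _ hπ0
      · rw [pow_succ, hv.map_mul _ _ ih.1 hπ0, ih.2, hπ1]; push_cast; ring
  rcases le_or_gt 0 k with h | h
  · refine ⟨π ^ k.toNat, (hpow _).1, ?_⟩; rw [(hpow _).2]; omega
  · refine ⟨(π ^ (-k).toNat)⁻¹, inv_ne_zero (hpow _).1, ?_⟩
    rw [v_inv hv (hpow _).1, (hpow _).2]; omega

lemma v_add_eq {x y : F} (hx : x ≠ 0) (hy : y ≠ 0) (hlt : vF x < vF y) :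
    x + y ≠ 0 ∧ vF (x + y) = vF x := by
  have hne : x + y ≠ 0 := by
    intro h
    have : y = -x := by linear_combination h
    rw [this, v_neg hv hx] at hlt; omega
  refine ⟨hne, ?_⟩
  have h1 := hv.min_le_add x y hx hy hne
  have h2 : vF x ≤ vF (x + y) := le_trans (by omega) h1
  rcases eq_or_lt_of_le h2 with h | h
  · omega
  · exfalso
    have h3 := hv.min_le_add (x + y) (-y) hne (neg_ne_zero.2 hy) (by simpa using hx)
    rw [v_neg hv hy] at h3
    have h4 : x + y + -y = x := by ring
    rw [h4] at h3; omega

lemma InP.add {i : ℤ} {x y : F} (hx : InP vF i x) (hy : InP vF i y) : InP vF i (x + y) := by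
  rcases hx with rfl | hx
  · simpa using hy
  rcases hy with rfl | hy
  · have h' : InP vF i x := Or.inr hx; simpa using h'
  by_cases hx0 : x = 0
  · have h' : InP vF i y := Or.inr hy; simpa [hx0] using h'
  by_cases hy0 : y = 0
  · have h' : InP vF i x := Or.inr hx; simpa [hy0] using h'
  by_cases h : x + y = 0
  · exact Or.inl h
  · exact Or.inr (le_trans (by omega) (hv.min_le_add x y hx0 hy0 h))

lemma InP.neg {i : ℤ} {x : F} (hx : InP vF i x) : InP vF i (-x) := by
  rcases hx with rfl | hx
  · simp [InP]
  by_cases h : x = 0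
  · simp [h, InP]
  · exact Or.inr (by rw [v_neg hv h]; exact hx)

lemma InP.sub {i : ℤ} {x y : F} (hx : InP vF i x) (hy : InP vF i y) : InP vF i (x - y) := by
  have := InP.add hv hx (InP.neg hv hy)
  simpa [sub_eq_add_neg] using this

lemma InP.mul {i j : ℤ} {x y : F} (hx : InP vF i x) (hy : InP vF j y) :
    InP vF (i + j) (x * y) := by
  by_cases h0 : x = 0
  · simp [h0, InP]
  by_cases h1 : y = 0
  · simp [h1, InP]
  rcases hx with rfl | hx
  · simp [InP]
  rcases hy with rfl | hy
  · simp [InP]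
  · exact Or.inr (by rw [hv.map_mul _ _ h0 h1]; omega)

lemma InP.mono {i j : ℤ} (hij : i ≤ j) {x : F} (hx : InP vF j x) : InP vF i x := by
  rcases hx with rfl | hx
  · exact Or.inl rfl
  · exact Or.inr (by omega)

lemma v_one_add {y : F} (hy : InP vF 1 y) : (1 + y) ≠ 0 ∧ vF (1 + y) = 0 := by
  rcases hy with rfl | hy
  · simpa using v_one hv
  by_cases h : y = 0
  · simpa [h] using v_one hv
  · have := v_add_eq hv (one_ne_zero) h (by rw [v_one hv]; omega)
    rw [v_one hv] at this; exact this

lemma InU_one_add {i : ℕ} (hi : 1 ≤ i) {y : F} (hy : InP vF (i : ℤ) y) :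
    InU vF i (1 + y) := by
  have h1 : InP vF 1 y := InP.mono hv (by exact_mod_cast hi) hy
  exact ⟨(v_one_add hv h1).1, (v_one_add hv h1).2, Or.inr (by simpa using hy)⟩

end Basic

section CharLemmas
variable {F : Type*} [Field F]

lemma chi_ne_zero {χ : F → ℂ} (hone : χ 1 = 1)
    (hmul : ∀ x y : F, x ≠ 0 → y ≠ 0 → χ (x * y) = χ x * χ y)
    {x : F} (hx : x ≠ 0) : χ x ≠ 0 := by
  have := hmul x x⁻¹ hx (inv_ne_zero hx)
  rw [mul_inv_cancel₀ hx, hone] at this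
  intro h; rw [h] at this; simp at this

lemma psi_ne_zero {ψ : F → ℂ} (hψ : IsAddChar ψ) (t : F) : ψ t ≠ 0 := by
  have := hψ.map_add t (-t)
  simp [hψ.map_zero] at this
  intro h; rw [h] at this; simp at this

end CharLemmas

/-- Build a monoid hom on `Multiplicative G` from an additively-multiplicative function. -/
def pHom {F : Type*} [Field F] (G : AddSubgroup F) (φ : F → ℂ)
    (h0 : φ 0 = 1) (hadd : ∀ x y : F, x ∈ G → y ∈ G → φ (x + y) = φ x * φ y) :
    Multiplicative G →* ℂ where
  toFun x := φ (Multiplicative.toAdd x : G)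
  map_one' := by simpa using h0
  map_mul' x y := by
    simpa using hadd (Multiplicative.toAdd x : G) (Multiplicative.toAdd y : G)
      (Multiplicative.toAdd x).2 (Multiplicative.toAdd y).2

lemma key_step {F : Type*} [Field F] {vF : F → ℤ} (hv : IsDiscreteVal vF)
    {q : ℕ} (hq : IsResidueCard vF q)
    {χ : F → ℂ} (hone : χ 1 = 1)
    (hmul : ∀ x y : F, x ≠ 0 → y ≠ 0 → χ (x * y) = χ x * χ y)
    {a : ℕ} (htriv : ∀ x, InU vF a x → χ x = 1) (ha : 1 ≤ a)
    {ψ : F → ℂ} (hψ : IsAddChar ψ) {n : ℤ} (hcond : AddCondEq vF ψ n)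
    {k : ℤ} (hk1 : 1 ≤ k) (hk2 : (a : ℤ) ≤ 2 * k)
    {z : F} (hz : ∀ y, InP vF (k + 1) y → χ (1 + y) = ψ (y * z)) :
    ∃ w : F, InP vF (-n - k - 1) w ∧ ∀ y, InP vF k y → χ (1 + y) = ψ (y * (z + w)) := by
  classical
  obtain ⟨S, hScard, hS0, hSrep⟩ := hq
  obtain ⟨uk, huk0, hukv⟩ := exists_val hv (F := F) k
  obtain ⟨ue, hue0, huev⟩ := exists_val hv (F := F) (-n - k - 1)
  -- χ is additive-to-multiplicative on P^k
  have chi_add : ∀ x x' : F, InP vF k x → InP vF k x' →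
      χ (1 + (x + x')) = χ (1 + x) * χ (1 + x') := by
    intro x x' hx hx'
    have h1x := v_one_add hv (InP.mono hv hk1 hx)
    have h1x' := v_one_add hv (InP.mono hv hk1 hx')
    have hs : InP vF k (x + x') := InP.add hv hx hx'
    have h1s := v_one_add hv (InP.mono hv hk1 hs)
    by_cases hxx : x * x' = 0
    · rcases mul_eq_zero.1 hxx with rfl | rfl
      · rw [zero_add, add_zero, hone, one_mul]
      · rw [add_zero, add_zero, hone, mul_one]
    have hx0 : x ≠ 0 := fun h => hxx (by simp [h])
    have hx'0 : x' ≠ 0 := fun h => hxx (by simp [h])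
    set u : F := x * x' / (1 + (x + x')) with hu
    have hua : InP vF (a : ℤ) u := by
      right
      rw [hu, div_eq_mul_inv, hv.map_mul _ _ hxx (inv_ne_zero h1s.1),
        v_inv hv h1s.1, h1s.2, hv.map_mul _ _ hx0 hx'0]
      rcases hx with h | h; · exact absurd h hx0
      rcases hx' with h' | h'; · exact absurd h' hx'0
      omega
    have hchiu : χ (1 + u) = 1 := htriv _ (InU_one_add hv ha hua)
    have hfact : (1 + x) * (1 + x') = (1 + (x + x')) * (1 + u) := by
      have hne : (1 + (x + x')) ≠ 0 := h1s.1
      rw [hu]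
      field_simp
      ring
    have h1u := v_one_add hv (InP.mono hv (by exact_mod_cast ha) hua)
    calc χ (1 + (x + x'))
        = χ (1 + (x + x')) * χ (1 + u) := by rw [hchiu, mul_one]
      _ = χ ((1 + (x + x')) * (1 + u)) := (hmul _ _ h1s.1 h1u.1).symm
      _ = χ ((1 + x) * (1 + x')) := by rw [hfact]
      _ = χ (1 + x) * χ (1 + x') := hmul _ _ h1x.1 h1x'.1
  -- the subgroup P^k
  set G : AddSubgroup F :=
    { carrier := {x | InP vF k x}
      zero_mem' := Or.inl rfl
      add_mem' := fun hx hy => InP.add hv hx hy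
      neg_mem' := fun hx => InP.neg hv hx } with hG
  have hmemG : ∀ x : F, x ∈ G ↔ InP vF k x := fun x => Iff.rfl
  -- the candidate characters
  have hfadd : ∀ w : F, ∀ x y : F, x ∈ G → y ∈ G → ψ ((x + y) * w) = ψ (x * w) * ψ (y * w) := by
    intro w x y _ _
    rw [show (x + y) * w = x * w + y * w by ring, hψ.map_add]
  set fhom : F → (Multiplicative G →* ℂ) := fun w =>
    pHom G (fun x => ψ (x * w)) (by simp [hψ.map_zero]) (hfadd w) with hfhom
  have hhadd : ∀ x y : F, x ∈ G → y ∈ G →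
      χ (1 + (x + y)) * (ψ ((x + y) * z))⁻¹ =
        (χ (1 + x) * (ψ (x * z))⁻¹) * (χ (1 + y) * (ψ (y * z))⁻¹) := by
    intro x y hx hy
    rw [chi_add x y hx hy, show (x + y) * z = x * z + y * z by ring, hψ.map_add,
      mul_inv]
    ring
  set hhom : Multiplicative G →* ℂ :=
    pHom G (fun x => χ (1 + x) * (ψ (x * z))⁻¹)
      (by simp [hone, hψ.map_zero]) hhadd with hhhom
  -- representative sets
  set S' : Finset F := S.image (fun s => uk * s) with hS'
  set W : Finset F := S.image (fun s => ue * s) with hW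
  have hS'G : ∀ s ∈ S', InP vF k s := by
    intro s hs
    rw [hS', Finset.mem_image] at hs
    obtain ⟨t, ht, rfl⟩ := hs
    have := InP.mul hv (Or.inr hukv.ge) (hS0 t ht)
    simpa using this
  have hWP : ∀ w ∈ W, InP vF (-n - k - 1) w := by
    intro w hw
    rw [hW, Finset.mem_image] at hw
    obtain ⟨t, ht, rfl⟩ := hw
    have := InP.mul hv (Or.inr huev.ge) (hS0 t ht)
    simpa using this
  -- existence of representatives in S' for P^k mod P^(k+1)
  have hrep : ∀ x : F, InP vF k x → ∃ s ∈ S', InP vF (k + 1) (x - s) := by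
    intro x hx
    have hxu : InP vF 0 (x * uk⁻¹) := by
      have := InP.mul hv hx (Or.inr (by rw [v_inv hv huk0, hukv] : -k ≤ vF uk⁻¹))
      simpa using this
    obtain ⟨s, ⟨hsS, hs1⟩, -⟩ := hSrep _ hxu
    refine ⟨uk * s, Finset.mem_image_of_mem _ hsS, ?_⟩
    have h2 : InP vF (k + 1) (uk * (x * uk⁻¹ - s)) := by
      have := InP.mul hv (Or.inr hukv.ge) hs1
      simpa using this
    have h3 : uk * (x * uk⁻¹ - s) = x - uk * s := by field_simp
    rwa [h3] at h2
  -- distinct elements of S have valuation-0 difference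
  have hSsep : ∀ s ∈ S, ∀ t ∈ S, s ≠ t → s - t ≠ 0 ∧ vF (s - t) = 0 := by
    intro s hs t ht hst
    have hne : s - t ≠ 0 := sub_ne_zero.2 hst
    refine ⟨hne, ?_⟩
    have h0 : InP vF 0 (s - t) := InP.sub hv (hS0 s hs) (hS0 t ht)
    by_contra hvv
    have h1 : InP vF 1 (s - t) := by
      rcases h0 with h | h; · exact absurd h hne
      · exact Or.inr (by omega)
    obtain ⟨s₀, -, hu⟩ := hSrep s (hS0 s hs)
    have e1 : t = s₀ := hu t ⟨ht, h1⟩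
    have e2 : s = s₀ := hu s ⟨hs, Or.inl (sub_self s)⟩
    exact hst (e2.trans e1.symm)
  -- ψ is trivial on P^{-n}
  have hψtriv := hcond.1
  -- injectivity of fhom on W
  have hinj : ∀ w ∈ W, ∀ w' ∈ W, fhom w = fhom w' → w = w' := by
    intro w hw w' hw' hf
    by_contra hne
    rw [hW, Finset.mem_image] at hw hw'
    obtain ⟨s, hs, rfl⟩ := hw
    obtain ⟨s', hs', rfl⟩ := hw'
    have hss' : s ≠ s' := fun h => hne (congrArg (fun t => ue * t) h)
    obtain ⟨hsub0, hsubv⟩ := hSsep s hs s' hs' hss'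
    have hdne : ue * s - ue * s' ≠ 0 := by
      rw [show ue * s - ue * s' = ue * (s - s') by ring]
      exact mul_ne_zero hue0 hsub0
    have hdv : vF (ue * s - ue * s') = -n - k - 1 := by
      rw [show ue * s - ue * s' = ue * (s - s') by ring,
        hv.map_mul _ _ hue0 hsub0, huev, hsubv]
      omega
    obtain ⟨t, htP, htne⟩ := hcond.2
    have ht0 : t ≠ 0 := fun h => htne (by rw [h, hψ.map_zero])
    have htv : -n - 1 ≤ vF t := by
      rcases htP with h | h; · exact absurd h ht0
      · omega
    set x : F := t / (ue * s - ue * s') with hx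
    have hxne : x ≠ 0 := div_ne_zero ht0 hdne
    have hxv : k ≤ vF x := by
      rw [hx, div_eq_mul_inv, hv.map_mul _ _ ht0 (inv_ne_zero hdne),
        v_inv hv hdne, hdv]; omega
    have hxG : x ∈ G := Or.inr hxv
    have := congrArg (fun f : Multiplicative G →* ℂ => f (Multiplicative.ofAdd ⟨x, hxG⟩)) hf
    simp only [hfhom] at this
    have hval : ψ (x * (ue * s)) = ψ (x * (ue * s')) := this
    have hid : x * (ue * s) = x * (ue * s') + t := by
      rw [hx]; field_simp; ring
    rw [hid, hψ.map_add] at hval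
    have h5 : ψ (x * (ue * s')) * ψ t = ψ (x * (ue * s')) * 1 := by
      rw [mul_one]; exact hval
    exact htne (mul_left_cancel₀ (psi_ne_zero hψ _) h5)
  -- triviality on P^{k+1} of all our characters
  have htrivW : ∀ w ∈ W, ∀ u : G, InP vF (k + 1) (u : F) → fhom w (Multiplicative.ofAdd u) = 1 := by
    intro w hw u hu
    have : InP vF (-n) ((u : F) * w) := by
      have := InP.mul hv hu (hWP w hw)
      exact InP.mono hv (by omega) this
    show ψ ((u : F) * w) = 1
    exact hψtriv _ this
  have htrivH : ∀ u : G, InP vF (k + 1) (u : F) → hhom (Multiplicative.ofAdd u) = 1 := by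
    intro u hu
    have h1 : χ (1 + (u : F)) = ψ ((u : F) * z) := hz _ hu
    simp only [hhhom, pHom, MonoidHom.coe_mk, OneHom.coe_mk]
    show χ (1 + (u : F)) * (ψ ((u : F) * z))⁻¹ = 1
    rw [h1, mul_inv_cancel₀ (psi_ne_zero hψ _)]
  -- main claim: hhom is one of the fhom w
  have hmain : ∃ w ∈ W, hhom = fhom w := by
    by_contra hcon
    push_neg at hcon
    set T : Finset (Multiplicative G →* ℂ) := insert hhom (W.image fhom) with hT
    have hhno : hhom ∉ W.image fhom := by
      rw [Finset.mem_image]; rintro ⟨w, hw, hwe⟩; exact hcon w hw hwe.symm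
    have hTcard : T.card = q + 1 := by
      rw [hT, Finset.card_insert_of_notMem hhno, Finset.card_image_of_injOn, hW,
        Finset.card_image_of_injective _ (mul_right_injective₀ hue0), hScard]
      intro w hw w' hw' h; exact hinj w hw w' hw' h
    -- all elements of T are trivial on P^{k+1}
    have hTtriv : ∀ f ∈ T, ∀ u : G, InP vF (k + 1) (u : F) → f (Multiplicative.ofAdd u) = 1 := by
      intro f hf
      rw [hT, Finset.mem_insert] at hf
      rcases hf with rfl | hf
      · exact htrivH
      · rw [Finset.mem_image] at hf
        obtain ⟨w, hw, rfl⟩ := hf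
        exact htrivW w hw
    -- restriction map
    set R : (Multiplicative G → ℂ) → ({s : F // s ∈ S'} → ℂ) :=
      fun g s => g (Multiplicative.ofAdd ⟨(s : F), hS'G _ s.2⟩) with hR
    -- determination: f x = f (rep x)
    have hdet : ∀ f ∈ T, ∀ x : G, ∀ s : F, ∀ hs : s ∈ S', InP vF (k + 1) ((x : F) - s) →
        f (Multiplicative.ofAdd x) = f (Multiplicative.ofAdd (⟨s, hS'G s hs⟩ : G)) := by
      intro f hf x s hs hd
      have hsplit : x = (⟨s, hS'G s hs⟩ : G) + (x - ⟨s, hS'G s hs⟩) := by abel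
      have : Multiplicative.ofAdd x =
          Multiplicative.ofAdd (⟨s, hS'G s hs⟩ : G) *
            Multiplicative.ofAdd (x - ⟨s, hS'G s hs⟩) := by
        rw [← ofAdd_add, ← hsplit]
      rw [this, map_mul, hTtriv f hf (x - ⟨s, hS'G s hs⟩) (by simpa using hd), mul_one]
    -- linear independence of the restricted family
    have hLI : LinearIndependent ℂ (fun f : {f : Multiplicative ↥G →* ℂ // f ∈ T} => R ⇑(f : Multiplicative G →* ℂ)) := by
      rw [Fintype.linearIndependent_iff]
      intro c hc
      have hind : LinearIndependent ℂ (fun f : {f : Multiplicative ↥G →* ℂ // f ∈ T} => ⇑(f : Multiplicative G →* ℂ)) :=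
        (linearIndependent_monoidHom (Multiplicative G) ℂ).comp _ Subtype.val_injective
      apply Fintype.linearIndependent_iff.1 hind c
      funext x
      obtain ⟨s, hsS', hsd⟩ := hrep (Multiplicative.toAdd x : G) (Multiplicative.toAdd x).2
      have hx' : x = Multiplicative.ofAdd (Multiplicative.toAdd x) := rfl
      have hcs := congrFun hc (⟨s, hsS'⟩ : {s : F // s ∈ S'})
      simp only [Finset.sum_apply, Pi.smul_apply, smul_eq_mul, Pi.zero_apply] at hcs ⊢
      calc ∑ f : {f : Multiplicative ↥G →* ℂ // f ∈ T}, c f * (f : Multiplicative G →* ℂ) x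
          = ∑ f : {f : Multiplicative ↥G →* ℂ // f ∈ T}, c f * R ⇑(f : Multiplicative G →* ℂ) ⟨s, hsS'⟩ := by
            apply Finset.sum_congr rfl
            intro f _
            congr 1
            rw [hx', hdet _ f.2 _ s hsS' hsd]
        _ = 0 := hcs
    have hcard : Fintype.card {f : Multiplicative ↥G →* ℂ // f ∈ T} ≤ Module.finrank ℂ ({s : F // s ∈ S'} → ℂ) :=
      hLI.fintype_card_le_finrank
    rw [Module.finrank_fintype_fun_eq_card, Fintype.card_coe, Fintype.card_coe, hTcard] at hcard
    have : S'.card ≤ q := le_trans (Finset.card_image_le) (le_of_eq hScard)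
    omega
  obtain ⟨w, hw, hwe⟩ := hmain
  refine ⟨w, hWP w hw, ?_⟩
  intro y hy
  have := congrArg (fun f : Multiplicative G →* ℂ => f (Multiplicative.ofAdd ⟨y, hy⟩)) hwe
  simp only [hhhom, hfhom] at this
  have hval : χ (1 + y) * (ψ (y * z))⁻¹ = ψ (y * w) := this
  have h2 : χ (1 + y) = ψ (y * w) * ψ (y * z) := by
    have hne := psi_ne_zero hψ (y * z)
    field_simp at hval
    linear_combination hval
  rw [h2, ← hψ.map_add, show y * w + y * z = y * (z + w) by ring]

/-- If `χ` is a multiplicative character of `F` with conductor `a ≥ 1`,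
`0 ≤ 2m ≤ a`, and `ψ` is a nontrivial additive character of `F` of conductor `n(ψ)`, then
there is `c ∈ F^×` with `v_F(c) = a + n(ψ)` such that `χ(1+y) = ψ(y/c)` for all
`y ∈ P_F^{a-m}`. -/
theorem exists_gamma_factor_base
    {F : Type*} [Field F] [CharZero F]
    (vF : F → ℤ) (hvF : IsDiscreteVal vF)
    (q : ℕ) (hq : IsResidueCard vF q)
    (χ : F → ℂ) (a : ℕ) (hχ : IsMulCharCond vF χ a) (ha : 1 ≤ a)
    (m : ℕ) (hm : 2 * m ≤ a)
    (ψ : F → ℂ) (hψ : IsAddChar ψ) (n : ℤ) (hψcond : AddCondEq vF ψ n) :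
    ∃ c : F, c ≠ 0 ∧ vF c = (a : ℤ) + n ∧
      ∀ y : F, InP vF ((a : ℤ) - m) y → χ (1 + y) = ψ (y / c) := by
  classical
  have hone := hχ.map_one
  have hmul := hχ.map_mul
  have htriv := hχ.triv
  have main : ∀ t : ℕ, t ≤ m → ∃ z : F, InP vF (-n - a) z ∧
      ∀ y, InP vF ((a : ℤ) - t) y → χ (1 + y) = ψ (y * z) := by
    intro t
    induction t with
    | zero =>
      intro _
      refine ⟨0, Or.inl rfl, ?_⟩
      intro y hy
      have hy' : InP vF (a : ℤ) y := by simpa using hy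
      rw [mul_zero, hψ.map_zero]
      exact htriv _ (InU_one_add hvF ha hy')
    | succ t ih =>
      intro ht
      obtain ⟨z, hzb, hz⟩ := ih (by omega)
      have hk1 : 1 ≤ (a : ℤ) - (t + 1) := by omega
      have hk2 : (a : ℤ) ≤ 2 * ((a : ℤ) - (t + 1)) := by omega
      have hz' : ∀ y, InP vF (((a : ℤ) - (t + 1)) + 1) y → χ (1 + y) = ψ (y * z) := by
        intro y hy
        have he : ((a : ℤ) - (t + 1)) + 1 = (a : ℤ) - t := by ring
        exact hz y (he ▸ hy)
      obtain ⟨w, hwP, hw⟩ := key_step hvF hq hone hmul htriv ha hψ hψcond hk1 hk2 hz'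
      refine ⟨z + w, ?_, ?_⟩
      · exact InP.add hvF hzb (InP.mono hvF (by omega) hwP)
      · intro y hy
        have he : (a : ℤ) - ((t + 1 : ℕ) : ℤ) = (a : ℤ) - (t + 1) := by push_cast; ring
        exact hw y (by rw [he] at hy; exact hy)
  obtain ⟨z, hzP, hz⟩ := main m le_rfl
  by_cases hm0 : m = 0
  · subst hm0
    obtain ⟨c, hc0, hcv⟩ := exists_val hvF (F := F) ((a : ℤ) + n)
    refine ⟨c, hc0, hcv, ?_⟩
    intro y hy
    have hy' : InP vF (a : ℤ) y := by simpa using hy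
    have h1 : χ (1 + y) = 1 := htriv _ (InU_one_add hvF ha hy')
    have h2 : ψ (y / c) = 1 := by
      apply hψcond.1
      have hcinv : InP vF (-(a : ℤ) - n) c⁻¹ :=
        Or.inr (by rw [v_inv hvF hc0, hcv]; ring_nf; omega)
      have := InP.mul hvF hy' hcinv
      rw [div_eq_mul_inv]
      exact InP.mono hvF (by omega) this
    rw [h1, h2]
  · by_cases hzv : z ≠ 0 ∧ vF z = -n - a
    · refine ⟨z⁻¹, inv_ne_zero hzv.1, ?_, ?_⟩
      · rw [v_inv hvF hzv.1, hzv.2]; ring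
      · intro y hy
        rw [show y / z⁻¹ = y * z by rw [div_eq_mul_inv, inv_inv]]
        exact hz y hy
    · exfalso
      have hz1 : z = 0 ∨ -n - a + 1 ≤ vF z := by
        rcases hzP with rfl | h
        · exact Or.inl rfl
        by_cases h0 : z = 0
        · exact Or.inl h0
        · have vne : vF z ≠ -n - a := fun hv' => hzv ⟨h0, hv'⟩
          right; omega
      have hall : ∀ y, InP vF ((a : ℤ) - 1) y → χ (1 + y) = 1 := by
        intro y hy
        have hy' : InP vF ((a : ℤ) - m) y := InP.mono hvF (by omega) hy
        rw [hz y hy']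
        rcases hz1 with rfl | hb
        · rw [mul_zero, hψ.map_zero]
        · apply hψcond.1
          have := InP.mul hvF hy (Or.inr hb : InP vF (-n - a + 1) z)
          have he : (a : ℤ) - 1 + (-n - a + 1) = -n := by ring
          rwa [he] at this
      obtain ⟨x, hxU, hxne⟩ := hχ.nontriv (a - 1) (by omega)
      have hxP : InP vF ((a : ℤ) - 1) (x - 1) := by
        rcases hxU.2.2 with h0 | h
        · exact absurd h0 (by omega)
        · have he : ((a - 1 : ℕ) : ℤ) = (a : ℤ) - 1 := by omega
          rwa [he] at h
      have := hall (x - 1) hxP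
      rw [show 1 + (x - 1) = x by ring] at this
      exact hxne this
end
end

section
/- Let χ be a multiplicative character of F with conductor a = a(χ) ≥ 1, let m be an integer with 0 ≤ 2m ≤ a, let ψ be a nontrivial additive character of F, and let c ∈ F^× satisfy v_F(c) = a + n(ψ) and χ(1 + y) = ψ(y/c) for all y ∈ P_F^{a−m}. Then Σ_{x ∈ U_F/U_F^{a}} χ(x)^{-1} ψ(x/c) = q_F^{m} · Σ_{z ∈ U_F^{m}/U_F^{a−m}} χ(z)^{-1} ψ(z/c), where each sum runs over any set of coset representatives (the summands depend only on the cosets). -/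
noncomputable section

namespace GaussAux

variable {F : Type*} [Field F] {v : F → ℤ}

lemma v_one (hv : IsDiscreteVal v) : v 1 = 0 := by
  have h := hv.map_mul 1 1 one_ne_zero one_ne_zero
  simp at h; linarith

lemma v_inv (hv : IsDiscreteVal v) {x : F} (hx : x ≠ 0) : v x⁻¹ = - v x := by
  have h := hv.map_mul x x⁻¹ hx (inv_ne_zero hx)
  rw [mul_inv_cancel₀ hx, v_one hv] at h; linarith

lemma v_neg (hv : IsDiscreteVal v) {x : F} (hx : x ≠ 0) : v (-x) = v x := by
  have h1 : v ((-1 : F) * (-1)) = v (-1) + v (-1) :=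
    hv.map_mul (-1) (-1) (by norm_num) (by norm_num)
  simp at h1
  rw [v_one hv] at h1
  have h2 := hv.map_mul (-1) x (by norm_num) hx
  rw [neg_one_mul] at h2
  omega

lemma v_add_ge (hv : IsDiscreteVal v) {x y : F} (hx : x ≠ 0) (hy : y ≠ 0)
    (h : x + y ≠ 0) : min (v x) (v y) ≤ v (x + y) := hv.min_le_add x y hx hy h

lemma InP_zero {i : ℤ} : InP v i (0 : F) := Or.inl rfl

lemma InP_of_le {i : ℤ} {x : F} (hx : x ≠ 0) (h : i ≤ v x) : InP v i x := Or.inr h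

lemma InP_mono {i j : ℤ} (hij : i ≤ j) {x : F} (h : InP v j x) : InP v i x := by
  rcases h with h | h
  · exact Or.inl h
  · exact Or.inr (le_trans hij h)

lemma InP_neg (hv : IsDiscreteVal v) {i : ℤ} {x : F} (h : InP v i x) : InP v i (-x) := by
  rcases h with h | h
  · simp [h, InP]
  · rcases eq_or_ne x 0 with rfl | hx
    · simp [InP]
    · exact Or.inr (by rw [v_neg hv hx]; exact h)

lemma InP_add (hv : IsDiscreteVal v) {i : ℤ} {x y : F} (hx : InP v i x) (hy : InP v i y) :
    InP v i (x + y) := by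
  rcases hx with rfl | hx
  · simpa using hy
  rcases hy with rfl | hy
  · rw [add_zero]; exact Or.inr hx
  rcases eq_or_ne (x + y) 0 with h0 | h0
  · exact Or.inl h0
  rcases eq_or_ne x 0 with rfl | hx0
  · rw [zero_add]; exact Or.inr hy
  rcases eq_or_ne y 0 with rfl | hy0
  · rw [add_zero]; exact Or.inr hx
  exact Or.inr (le_trans (le_min hx hy) (hv.min_le_add x y hx0 hy0 h0))

lemma InP_sub (hv : IsDiscreteVal v) {i : ℤ} {x y : F} (hx : InP v i x) (hy : InP v i y) :
    InP v i (x - y) := by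
  rw [sub_eq_add_neg]; exact InP_add hv hx (InP_neg hv hy)

lemma InP_mul (hv : IsDiscreteVal v) {i j : ℤ} {x y : F} (hx : InP v i x) (hy : InP v j y) :
    InP v (i + j) (x * y) := by
  rcases hx with rfl | hx
  · simp [InP]
  rcases hy with rfl | hy
  · simp [InP]
  rcases eq_or_ne x 0 with rfl | hx0
  · simp [InP]
  rcases eq_or_ne y 0 with rfl | hy0
  · simp [InP]
  exact Or.inr (by rw [hv.map_mul x y hx0 hy0]; exact add_le_add hx hy)

/-- if `v y > v x` then `v (x+y) = v x`. -/
lemma v_add_eq (hv : IsDiscreteVal v) {x y : F} (hx : x ≠ 0) (hy : y ≠ 0)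
    (h : v x < v y) : v (x + y) = v x := by
  have hne : x + y ≠ 0 := by
    intro h0
    have hyx : y = -x := eq_neg_of_add_eq_zero_right h0
    rw [hyx, v_neg hv hx] at h; omega
  have h1 : min (v x) (v y) ≤ v (x + y) := hv.min_le_add x y hx hy hne
  rw [min_eq_left (le_of_lt h)] at h1
  rcases lt_or_eq_of_le h1 with h2 | h2
  · exfalso
    have h3 : v x = v ((x + y) + (-y)) := by ring_nf
    have h4 : min (v (x+y)) (v (-y)) ≤ v ((x+y) + (-y)) := by
      apply hv.min_le_add _ _ hne (neg_ne_zero.mpr hy)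
      simpa using hx
    rw [v_neg hv hy, ← h3] at h4
    omega
  · omega

end GaussAux
namespace GaussAux

variable {F : Type*} [Field F] {v : F → ℤ}

lemma InU_ne_zero {i : ℕ} {x : F} (h : InU v i x) : x ≠ 0 := h.1

lemma InU_v_eq {i : ℕ} {x : F} (h : InU v i x) : v x = 0 := h.2.1

lemma InU_sub_one (hv : IsDiscreteVal v) {i : ℕ} {x : F} (h : InU v i x) :
    InP v (i : ℤ) (x - 1) := by
  rcases h.2.2 with hi | hP
  · subst hi
    rcases eq_or_ne (x - 1) 0 with h0 | h0
    · exact Or.inl h0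
    · refine Or.inr ?_
      have : x - 1 = x + (-1) := by ring
      rw [this]
      have hmin := hv.min_le_add x (-1) h.1 (by norm_num) (by rw [← this]; exact h0)
      have hv1 : v (-1 : F) = 0 := by
        rw [v_neg hv one_ne_zero]; exact v_one hv
      rw [h.2.1, hv1] at hmin; simpa using hmin
  · exact hP

lemma InU_of {i : ℕ} {x : F} (h1 : x ≠ 0) (h2 : v x = 0) (h3 : InP v (i : ℤ) (x - 1)) :
    InU v i x := ⟨h1, h2, Or.inr h3⟩

lemma InU_one (hv : IsDiscreteVal v) (i : ℕ) : InU v i (1 : F) :=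
  InU_of one_ne_zero (v_one hv) (by simp [InP])

lemma InU_mul (hv : IsDiscreteVal v) {i : ℕ} {x y : F} (hx : InU v i x) (hy : InU v i y) :
    InU v i (x * y) := by
  refine InU_of (mul_ne_zero hx.1 hy.1) ?_ ?_
  · rw [hv.map_mul x y hx.1 hy.1, hx.2.1, hy.2.1]; ring
  · have h1 : x * y - 1 = x * (y - 1) + (x - 1) := by ring
    rw [h1]
    refine InP_add hv ?_ (InU_sub_one hv hx)
    have := InP_mul hv (Or.inr (le_of_eq hx.2.1.symm) : InP v 0 x) (InU_sub_one hv hy)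
    simpa using this

lemma InU_inv (hv : IsDiscreteVal v) {i : ℕ} {x : F} (hx : InU v i x) : InU v i x⁻¹ := by
  refine InU_of (inv_ne_zero hx.1) (by rw [v_inv hv hx.1, hx.2.1]; ring) ?_
  have h1 : x⁻¹ - 1 = (1 - x) * x⁻¹ := by
    rw [sub_mul, one_mul, mul_inv_cancel₀ hx.1]
  rw [h1]
  have h2 : InP v (i : ℤ) (1 - x) := by simpa using InP_neg hv (InU_sub_one hv hx)
  have h3 : InP v 0 x⁻¹ := Or.inr (by rw [v_inv hv hx.1, hx.2.1]; norm_num)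
  have := InP_mul hv h2 h3
  simpa using this

lemma InU_mono (hv : IsDiscreteVal v) {i j : ℕ} (hij : i ≤ j) {x : F} (hx : InU v j x) :
    InU v i x :=
  InU_of hx.1 hx.2.1 (InP_mono (by exact_mod_cast hij) (InU_sub_one hv hx))

lemma InU_mul_inv (hv : IsDiscreteVal v) {i : ℕ} {x y : F} (hx : InU v i x) (hy : InU v i y) :
    InU v i (x * y⁻¹) := InU_mul hv hx (InU_inv hv hy)

/-- if `x * y⁻¹ ∈ U^i` then `y * x⁻¹ ∈ U^i`. -/
lemma InU_symm (hv : IsDiscreteVal v) {i : ℕ} {x y : F} (hy : y ≠ 0)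
    (h : InU v i (x * y⁻¹)) : InU v i (y * x⁻¹) := by
  have hx : x ≠ 0 := by
    intro h0; rw [h0, zero_mul] at h; exact h.1 rfl
  have := InU_inv hv h
  rwa [mul_inv, inv_inv, mul_comm] at this

lemma InU_trans (hv : IsDiscreteVal v) {i : ℕ} {x y z : F} (hz : z ≠ 0)
    (h1 : InU v i (x * y⁻¹)) (h2 : InU v i (y * z⁻¹)) : InU v i (x * z⁻¹) := by
  have := InU_mul hv h1 h2
  have hy : y ≠ 0 := by
    intro h0; rw [h0, zero_mul] at h2; exact h2.1 rfl
  rwa [show x * y⁻¹ * (y * z⁻¹) = x * z⁻¹ by field_simp] at this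

end GaussAux
namespace GaussAux

variable {F : Type*} [Field F] {v : F → ℤ}

lemma sum_addReps_eq (hv : IsDiscreteVal v) {i j : ℤ} {Y Y' : Finset F}
    (hY : IsAddReps v i j Y) (hY' : IsAddReps v i j Y') (g : F → ℂ)
    (hg : ∀ y d : F, InP v i y → InP v j d → g (y + d) = g y) :
    ∑ y ∈ Y, g y = ∑ y ∈ Y', g y := by
  refine Finset.sum_bij' (fun y hy => (hY'.2 y (hY.1 y hy)).choose)
    (fun y' hy' => (hY.2 y' (hY'.1 y' hy')).choose) ?_ ?_ ?_ ?_ ?_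
  · intro y hy; exact (hY'.2 y (hY.1 y hy)).choose_spec.1.1
  · intro y' hy'; exact (hY.2 y' (hY'.1 y' hy')).choose_spec.1.1
  · intro y hy
    have spec := (hY'.2 y (hY.1 y hy)).choose_spec
    set s := (hY'.2 y (hY.1 y hy)).choose
    exact ((hY.2 s (hY'.1 s spec.1.1)).choose_spec.2 y ⟨hy, by rw [← neg_sub]; exact InP_neg hv spec.1.2⟩).symm
  · intro y' hy'
    have spec := (hY.2 y' (hY'.1 y' hy')).choose_spec
    set s := (hY.2 y' (hY'.1 y' hy')).choose
    exact ((hY'.2 s (hY.1 s spec.1.1)).choose_spec.2 y' ⟨hy', by rw [← neg_sub]; exact InP_neg hv spec.1.2⟩).symm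
  · intro y hy
    have spec := (hY'.2 y (hY.1 y hy)).choose_spec
    set s := (hY'.2 y (hY.1 y hy)).choose
    show g y = g s
    have h1 : y + (s - y) = s := by ring
    rw [← h1]
    exact (hg y (s - y) (hY.1 y hy) (by rw [← neg_sub y s]; exact InP_neg hv spec.1.2)).symm

lemma sum_mulReps_eq (hv : IsDiscreteVal v) {i j : ℕ} {Y Y' : Finset F}
    (hY : IsMulReps v i j Y) (hY' : IsMulReps v i j Y') (g : F → ℂ)
    (hg : ∀ x u : F, InU v i x → InU v j u → g (x * u) = g x) :
    ∑ y ∈ Y, g y = ∑ y ∈ Y', g y := by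
  refine Finset.sum_bij' (fun y hy => (hY'.2 y (hY.1 y hy)).choose)
    (fun y' hy' => (hY.2 y' (hY'.1 y' hy')).choose) ?_ ?_ ?_ ?_ ?_
  · intro y hy; exact (hY'.2 y (hY.1 y hy)).choose_spec.1.1
  · intro y' hy'; exact (hY.2 y' (hY'.1 y' hy')).choose_spec.1.1
  · intro y hy
    have spec := (hY'.2 y (hY.1 y hy)).choose_spec
    set s := (hY'.2 y (hY.1 y hy)).choose
    exact ((hY.2 s (hY'.1 s spec.1.1)).choose_spec.2 y
      ⟨hy, InU_symm hv (hY'.1 _ spec.1.1).1 spec.1.2⟩).symm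
  · intro y' hy'
    have spec := (hY.2 y' (hY'.1 y' hy')).choose_spec
    set s := (hY.2 y' (hY'.1 y' hy')).choose
    exact ((hY'.2 s (hY.1 s spec.1.1)).choose_spec.2 y'
      ⟨hy', InU_symm hv (hY.1 _ spec.1.1).1 spec.1.2⟩).symm
  · intro y hy
    have spec := (hY'.2 y (hY.1 y hy)).choose_spec
    set s := (hY'.2 y (hY.1 y hy)).choose
    have hs : InU v i s := hY'.1 s spec.1.1
    have hu : InU v j (s * y⁻¹) := InU_symm hv hs.1 spec.1.2
    show g y = g s
    have h1 : y * (s * y⁻¹) = s := by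
      rw [mul_comm s, ← mul_assoc, mul_inv_cancel₀ (hY.1 y hy).1, one_mul]
    rw [← h1]
    exact (hg y (s * y⁻¹) (hY.1 y hy) hu).symm

end GaussAux
namespace GaussAux

variable {F : Type*} [Field F] {v : F → ℤ}

lemma v_zpow (hv : IsDiscreteVal v) {x : F} (hx : x ≠ 0) (t : ℤ) :
    v (x ^ t) = t * v x := by
  induction t using Int.induction_on with
  | zero => simpa using v_one hv
  | succ k ih =>
      rw [zpow_add_one₀ hx, hv.map_mul _ _ (zpow_ne_zero _ hx) hx, ih]; ring
  | pred k ih =>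
      rw [zpow_sub_one₀ hx, hv.map_mul _ _ (zpow_ne_zero _ hx) (inv_ne_zero hx),
        v_inv hv hx, ih]; ring

lemma chi_ne_zero {χ : F → ℂ} {a : ℕ} (hχ : IsMulCharCond v χ a) {x : F} (hx : x ≠ 0) :
    χ x ≠ 0 := by
  have h := hχ.map_mul x x⁻¹ hx (inv_ne_zero hx)
  rw [mul_inv_cancel₀ hx, hχ.map_one] at h
  intro h0; rw [h0] at h; simp at h

lemma chi_inv {χ : F → ℂ} {a : ℕ} (hχ : IsMulCharCond v χ a) {x : F} (hx : x ≠ 0) :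
    χ x⁻¹ = (χ x)⁻¹ := by
  have h := hχ.map_mul x x⁻¹ hx (inv_ne_zero hx)
  rw [mul_inv_cancel₀ hx, hχ.map_one] at h
  exact eq_inv_of_mul_eq_one_right h.symm

lemma psi_ne_zero {ψ : F → ℂ} (hψ : IsAddChar ψ) (x : F) : ψ x ≠ 0 := by
  have h := hψ.map_add x (-x)
  rw [add_neg_cancel, hψ.map_zero] at h
  intro h0; rw [h0] at h; simp at h

lemma psi_neg {ψ : F → ℂ} (hψ : IsAddChar ψ) (x : F) : ψ (-x) = (ψ x)⁻¹ := by
  have h := hψ.map_add x (-x)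
  rw [add_neg_cancel, hψ.map_zero] at h
  field_simp [psi_ne_zero hψ x]
  linear_combination -h

lemma IsAddReps.translate [DecidableEq F] (hv : IsDiscreteVal v) {i j : ℤ} {Y : Finset F}
    (hY : IsAddReps v i j Y) {y₀ : F} (hy₀ : InP v i y₀) :
    IsAddReps v i j (Y.image (· + y₀)) := by
  constructor
  · intro s hs
    obtain ⟨y, hy, rfl⟩ := Finset.mem_image.mp hs
    exact InP_add hv (hY.1 y hy) hy₀
  · intro x hx
    obtain ⟨y, ⟨hyY, hyP⟩, hyu⟩ := hY.2 (x - y₀) (InP_sub hv hx hy₀)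
    refine ⟨y + y₀, ⟨Finset.mem_image.mpr ⟨y, hyY, rfl⟩, by
      have : x - (y + y₀) = x - y₀ - y := by ring
      rw [this]; exact hyP⟩, ?_⟩
    rintro s ⟨hs, hsP⟩
    obtain ⟨y', hy', rfl⟩ := Finset.mem_image.mp hs
    have : y' = y := hyu y' ⟨hy', by
      have h2 : x - y₀ - y' = x - (y' + y₀) := by ring
      rw [h2]; exact hsP⟩
    rw [this]

lemma addReps_exists (hv : IsDiscreteVal v) {q : ℕ} (hq : IsResidueCard v q)
    (i : ℤ) (k : ℕ) : ∃ Y : Finset F, IsAddReps v i (i + k) Y ∧ Y.card = q ^ k := by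
  classical
  obtain ⟨π, hπ0, hπ1⟩ := hv.exists_uniformizer
  obtain ⟨R, hRcard, hRmem, hRrep⟩ := hq
  induction k with
  | zero =>
      refine ⟨{0}, ⟨?_, ?_⟩, by simp⟩
      · intro s hs; simp at hs; simp [hs, InP_zero]
      · intro x hx
        refine ⟨0, ⟨Finset.mem_singleton_self 0, by simpa using hx⟩, ?_⟩
        intro s hs; simpa using hs.1
  | succ k ih =>
      obtain ⟨Y, hY, hYcard⟩ := ih
      have hπk : ∀ t : ℤ, v (π ^ t) = t := fun t => by rw [v_zpow hv hπ0, hπ1]; ring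
      have hπkne : (π : F) ^ (i + k) ≠ 0 := zpow_ne_zero _ hπ0
      refine ⟨(Y ×ˢ R).image (fun p => p.1 + p.2 * π ^ (i + k : ℤ)), ⟨?_, ?_⟩, ?_⟩
      · intro s hs
        obtain ⟨⟨y, r⟩, hp, rfl⟩ := Finset.mem_image.mp hs
        simp only [Finset.mem_product] at hp
        refine InP_add hv (hY.1 y hp.1) ?_
        have h5 := InP_mul hv (hRmem r hp.2) (InP_of_le hπkne (le_of_eq (hπk (i+k)).symm))
        rw [zero_add] at h5
        exact InP_mono (by omega) h5
      · intro x hx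
        obtain ⟨y, ⟨hyY, hyP⟩, hyu⟩ := hY.2 x hx
        set w := (x - y) * (π ^ (i + k : ℤ))⁻¹ with hw
        have hwP : InP v 0 w := by
          have h1 : InP v (-(i + k)) (π ^ (i + k : ℤ))⁻¹ :=
            InP_of_le (inv_ne_zero hπkne) (by rw [v_inv hv hπkne, hπk])
          have h2 := InP_mul hv hyP h1
          convert h2 using 2
          ring
        obtain ⟨r, ⟨hrR, hrP⟩, hru⟩ := hRrep w hwP
        refine ⟨y + r * π ^ (i + k : ℤ), ⟨Finset.mem_image.mpr
          ⟨(y, r), Finset.mem_product.mpr ⟨hyY, hrR⟩, rfl⟩, ?_⟩, ?_⟩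
        · have h1 : x - (y + r * π ^ (i + k : ℤ)) = (w - r) * π ^ (i + k : ℤ) := by
            rw [hw]; field_simp; ring
          rw [h1]
          have h4 := InP_mul hv hrP (InP_of_le hπkne (le_of_eq (hπk (i+k)).symm))
          have h5 : ((i : ℤ) + ((k : ℕ) + 1 : ℕ)) = 1 + (i + k) := by push_cast; ring
          rw [h5]
          exact h4
        · rintro s ⟨hs, hsP⟩
          obtain ⟨⟨y', r'⟩, hp, rfl⟩ := Finset.mem_image.mp hs
          simp only [Finset.mem_product] at hp
          have hy'y : y' = y := by
            refine hyu y' ⟨hp.1, ?_⟩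
            have h1 : x - y' = r' * π ^ (i + k : ℤ) + (x - (y' + r' * π ^ (i + k : ℤ))) := by
              ring
            rw [h1]
            refine InP_add hv ?_ (InP_mono (by push_cast; omega) hsP)
            have h5 := InP_mul hv (hRmem r' hp.2) (InP_of_le hπkne (le_of_eq (hπk (i+k)).symm))
            rw [zero_add] at h5
            exact h5
          have hr'r : r' = r := by
            refine hru r' ⟨hp.2, ?_⟩
            have h1 : w - r' = (x - (y' + r' * π ^ (i + k : ℤ))) * (π ^ (i + k : ℤ))⁻¹ := by
              rw [hw, hy'y]; field_simp; ring
            rw [h1]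
            have h2 : InP v (-(i + k)) (π ^ (i + k : ℤ))⁻¹ :=
              InP_of_le (inv_ne_zero hπkne) (by rw [v_inv hv hπkne, hπk])
            have h3 : InP v (i + k + 1) (x - (y' + r' * π ^ (i + k : ℤ))) :=
              InP_mono (by push_cast; omega) hsP
            have h6 := InP_mul hv h3 h2
            have h7 : (i + ↑k + 1) + -(i + ↑k) = 1 := by ring
            rw [h7] at h6
            exact h6
          rw [hy'y, hr'r]
      · have hinj : Set.InjOn (fun p : F × F => p.1 + p.2 * π ^ (i + k : ℤ)) ((Y ×ˢ R : Finset (F × F)) : Set (F × F)) := by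
          rintro ⟨y1, r1⟩ hp1 ⟨y2, r2⟩ hp2 heq
          simp only [Finset.mem_coe, Finset.mem_product] at hp1 hp2
          simp only at heq
          have hyy : y1 = y2 := by
            have h1 : y2 - y1 = (r1 - r2) * π ^ (i + k : ℤ) := by
              linear_combination -heq
            obtain ⟨s, _, hsu⟩ := hY.2 y2 (hY.1 y2 hp2.1)
            have e1 : y1 = s := by
              refine hsu y1 ⟨hp1.1, ?_⟩
              rw [h1]
              have := InP_mul hv (InP_sub hv (hRmem r1 hp1.2) (hRmem r2 hp2.2))
                (InP_of_le hπkne (le_of_eq (hπk (i+k)).symm))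
              simpa using this
            have e2 : y2 = s := hsu y2 ⟨hp2.1, by simp [InP_zero]⟩
            rw [e1, e2]
          have hrr : r1 = r2 := by
            rw [hyy] at heq
            have := add_left_cancel heq
            exact mul_right_cancel₀ hπkne this
          rw [hyy, hrr]
        rw [Finset.card_image_of_injOn hinj, Finset.card_product, hYcard, hRcard]
        ring

end GaussAux
namespace GaussAux

variable {F : Type*} [Field F] {v : F → ℤ}

lemma InU_one_add (hv : IsDiscreteVal v) {j : ℕ} (hj : 1 ≤ j) {y : F}
    (h : InP v (j : ℤ) y) : InU v j (1 + y) := by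
  rcases eq_or_ne y 0 with rfl | hy0
  · simpa using InU_one hv j
  have hvy : (j : ℤ) ≤ v y := h.resolve_left hy0
  have h1 : v (1 : F) < v y := by rw [v_one hv]; omega
  have hne : (1 : F) + y ≠ 0 := by
    intro h0
    have : y = -1 := by linear_combination h0
    rw [this, v_neg hv one_ne_zero, v_one hv] at hvy; omega
  refine InU_of hne ?_ (by simpa using h)
  rw [v_add_eq hv one_ne_zero hy0 h1, v_one hv]

lemma InP_c_inv (hv : IsDiscreteVal v) {c : F} (hc0 : c ≠ 0) {a : ℕ} {n : ℤ}
    (hvc : v c = (a : ℤ) + n) : InP v (-(a : ℤ) - n) c⁻¹ :=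
  InP_of_le (inv_ne_zero hc0) (by rw [v_inv hv hc0, hvc]; omega)

section main
variable {χ : F → ℂ} {a : ℕ} {m : ℕ} {ψ : F → ℂ} {n : ℤ} {c : F}

/-- invariance of the Gauss-sum summand under `U^a`. -/
lemma f_inv_a (hv : IsDiscreteVal v) (hχ : IsMulCharCond v χ a)
    (hψ : IsAddChar ψ) (hψc : AddCondEq v ψ n) (hc0 : c ≠ 0)
    (hvc : v c = (a : ℤ) + n) :
    ∀ x u : F, InU v 0 x → InU v a u →
      (χ (x * u))⁻¹ * ψ (x * u / c) = (χ x)⁻¹ * ψ (x / c) := by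
  intro x u hx hu
  have hsplit : x * u / c = x / c + x * (u - 1) * c⁻¹ := by
    field_simp; ring
  have hP : InP v (-n) (x * (u - 1) * c⁻¹) := by
    have h1 := InP_mul hv (InP_mul hv (InP_of_le hx.1 (le_of_eq hx.2.1.symm))
      (InU_sub_one hv hu)) (InP_c_inv hv hc0 hvc)
    have h2 : (0 + (a : ℤ)) + (-(a : ℤ) - n) = -n := by ring
    rw [h2] at h1
    exact h1
  rw [hχ.map_mul x u hx.1 hu.1, hχ.triv u hu, hsplit, hψ.map_add, hψc.1 _ hP]
  ring

/-- invariance of the Gauss-sum summand under `U^{a-m}` on `U^m`. -/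
lemma f_inv_am (hv : IsDiscreteVal v) (hχ : IsMulCharCond v χ a)
    (hm : 2 * m ≤ a) (hψ : IsAddChar ψ) (hψc : AddCondEq v ψ n) (hc0 : c ≠ 0)
    (hvc : v c = (a : ℤ) + n)
    (hcchar : ∀ y : F, InP v ((a : ℤ) - m) y → χ (1 + y) = ψ (y / c)) :
    ∀ z u : F, InU v m z → InU v (a - m) u →
      (χ (z * u))⁻¹ * ψ (z * u / c) = (χ z)⁻¹ * ψ (z / c) := by
  intro z u hz hu
  have hcast : ((a - m : ℕ) : ℤ) = (a : ℤ) - m := by omega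
  have huP : InP v ((a : ℤ) - m) (u - 1) := by
    rw [← hcast]; exact InU_sub_one hv hu
  have hχu : χ u = ψ ((u - 1) / c) := by
    have := hcchar (u - 1) huP
    rwa [add_sub_cancel] at this
  have hsplit : z * u / c = z / c + ((u - 1) / c + (z - 1) * (u - 1) * c⁻¹) := by
    field_simp; ring
  have hP : InP v (-n) ((z - 1) * (u - 1) * c⁻¹) := by
    have h1 := InP_mul hv (InP_mul hv (InU_sub_one hv hz) huP) (InP_c_inv hv hc0 hvc)
    have h2 : ((m : ℤ) + ((a : ℤ) - m)) + (-(a : ℤ) - n) = -n := by ring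
    rw [h2] at h1
    exact h1
  have key : ψ (z * u / c) * χ z = ψ (z / c) * (χ z * χ u) := by
    rw [hχu, hsplit, hψ.map_add, hψ.map_add, hψc.1 _ hP, mul_one]
    ring
  have hz0 := chi_ne_zero hχ hz.1
  have hzu0 := chi_ne_zero hχ (mul_ne_zero hz.1 hu.1)
  rw [hχ.map_mul z u hz.1 hu.1] at hzu0 ⊢
  have hu0 : χ u ≠ 0 := fun h0 => hzu0 (by rw [h0, mul_zero])
  have h' : ψ (z * u / c) = ψ (z / c) * (χ z * χ u) * (χ z)⁻¹ := by
    rw [← key, mul_assoc, mul_inv_cancel₀ hz0, mul_one]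
  rw [h']
  linear_combination (χ z)⁻¹ * ψ (z / c) * mul_inv_cancel₀ hzu0

/-- expansion of the summand at `x₀ (1+y)`. -/
lemma f_expand (hv : IsDiscreteVal v) (hχ : IsMulCharCond v χ a) (ha : 1 ≤ a)
    (hm : 2 * m ≤ a) (hψ : IsAddChar ψ) (hc0 : c ≠ 0)
    (hcchar : ∀ y : F, InP v ((a : ℤ) - m) y → χ (1 + y) = ψ (y / c))
    (x₀ : F) (hx₀ : InU v 0 x₀) :
    ∀ y : F, InP v ((a : ℤ) - m) y →
      (χ (x₀ * (1 + y)))⁻¹ * ψ (x₀ * (1 + y) / c)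
        = ((χ x₀)⁻¹ * ψ (x₀ / c)) * ψ ((x₀ - 1) / c * y) := by
  intro y hy
  have hcast : ((a - m : ℕ) : ℤ) = (a : ℤ) - m := by omega
  have h1yU : InU v (a - m) (1 + y) := InU_one_add hv (by omega) (by rw [hcast]; exact hy)
  have h1y : (1 : F) + y ≠ 0 := h1yU.1
  have hχ1y : χ (1 + y) = ψ (y / c) := hcchar y hy
  have hsplit : x₀ * (1 + y) / c = x₀ / c + (y / c + (x₀ - 1) / c * y) := by
    field_simp; ring
  have harg : (x₀ - 1) / c * y = (x₀ - 1) * y / c := by ring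
  rw [harg]
  have hsplit2 : x₀ * (1 + y) / c = x₀ / c + (y / c + (x₀ - 1) * y / c) := by
    field_simp; ring
  have key : ψ (x₀ * (1 + y) / c) * χ x₀ = ψ (x₀ / c) * ψ ((x₀ - 1) * y / c) * (χ x₀ * χ (1 + y)) := by
    rw [hχ1y, hsplit2, hψ.map_add, hψ.map_add]
    ring
  have hx0 := chi_ne_zero hχ hx₀.1
  have hxy0 := chi_ne_zero hχ (mul_ne_zero hx₀.1 h1y)
  rw [hχ.map_mul x₀ (1 + y) hx₀.1 h1y] at hxy0 ⊢
  have hy0 : χ (1 + y) ≠ 0 := fun h0 => hxy0 (by rw [h0, mul_zero])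
  have h' : ψ (x₀ * (1 + y) / c)
      = ψ (x₀ / c) * ψ ((x₀ - 1) * y / c) * (χ x₀ * χ (1 + y)) * (χ x₀)⁻¹ := by
    rw [← key, mul_assoc, mul_inv_cancel₀ hx0, mul_one]
  rw [h']
  linear_combination (χ x₀)⁻¹ * ψ (x₀ / c) * ψ ((x₀ - 1) * y / c) * mul_inv_cancel₀ hxy0

end main
end GaussAux
namespace GaussAux

variable {F : Type*} [Field F] {v : F → ℤ}

section main2
variable {χ : F → ℂ} {a : ℕ} {m : ℕ} {ψ : F → ℂ} {n : ℤ} {c : F}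

lemma fiber_sum (hv : IsDiscreteVal v) {q : ℕ} (hq : IsResidueCard v q)
    (hχ : IsMulCharCond v χ a) (ha : 1 ≤ a) (hm : 2 * m ≤ a)
    (hψ : IsAddChar ψ) (hψc : AddCondEq v ψ n) (hc0 : c ≠ 0) (hvc : v c = (a : ℤ) + n)
    (hcchar : ∀ y : F, InP v ((a : ℤ) - m) y → χ (1 + y) = ψ (y / c))
    {S : Finset F} (hS : IsMulReps v 0 a S) (x₀ : F) (hx₀ : InU v 0 x₀)
    [DecidablePred fun s => InU v (a - m) (s * x₀⁻¹)] :
    (InP v (m : ℤ) (x₀ - 1) →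
      ∑ s ∈ S.filter (fun s => InU v (a - m) (s * x₀⁻¹)), (χ s)⁻¹ * ψ (s / c)
        = (q : ℂ) ^ m * ((χ x₀)⁻¹ * ψ (x₀ / c))) ∧
    (¬ InP v (m : ℤ) (x₀ - 1) →
      ∑ s ∈ S.filter (fun s => InU v (a - m) (s * x₀⁻¹)), (χ s)⁻¹ * ψ (s / c) = 0) := by
  obtain ⟨Y, hY0, hYcard⟩ := addReps_exists hv hq ((a : ℤ) - m) m
  have hY : IsAddReps v ((a : ℤ) - m) a Y := by
    have he : ((a : ℤ) - m) + m = (a : ℤ) := by ring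
    rwa [he] at hY0
  have hcast : ((a - m : ℕ) : ℤ) = (a : ℤ) - m := by omega
  have ham1 : 1 ≤ a - m := by omega
  have h1yU : ∀ y ∈ Y, InU v (a - m) (1 + y) := fun y hy =>
    InU_one_add hv ham1 (by rw [hcast]; exact hY.1 y hy)
  have h1y0 : ∀ y ∈ Y, (1 : F) + y ≠ 0 := fun y hy => (h1yU y hy).1
  have hx₀y : ∀ y ∈ Y, InU v 0 (x₀ * (1 + y)) := fun y hy =>
    InU_mul hv hx₀ (InU_mono hv (Nat.zero_le _) (h1yU y hy))
  have pf1 : ∀ s ∈ S.filter (fun s => InU v (a - m) (s * x₀⁻¹)),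
      InP v ((a : ℤ) - m) (s * x₀⁻¹ - 1) := fun s hs => by
    rw [← hcast]; exact InU_sub_one hv (Finset.mem_filter.mp hs).2
  -- the common equivalence fact for elements of the fiber
  have key : ∀ s, ∀ hs : s ∈ S.filter (fun s => InU v (a - m) (s * x₀⁻¹)),
      ∀ y ∈ Y, InP v (a : ℤ) ((s * x₀⁻¹ - 1) - y) → InU v a (x₀ * (1 + y) * s⁻¹) := by
    intro s hs y hy hP
    have hsS := (Finset.mem_filter.mp hs).1
    have hs0 : s ≠ 0 := (hS.1 s hsS).1
    have hvs : v s = 0 := (hS.1 s hsS).2.1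
    have heq : x₀ * (1 + y) * s⁻¹ - 1 = -((x₀ * s⁻¹) * ((s * x₀⁻¹ - 1) - y)) := by
      field_simp [hx₀.1, hs0]
      ring
    have hx₀s : InP v 0 (x₀ * s⁻¹) := InP_of_le (mul_ne_zero hx₀.1 (inv_ne_zero hs0))
      (le_of_eq (by rw [hv.map_mul _ _ hx₀.1 (inv_ne_zero hs0), v_inv hv hs0, hx₀.2.1, hvs]; ring))
    have hprod := InP_neg hv (InP_mul hv hx₀s hP)
    rw [zero_add] at hprod
    refine InU_of (mul_ne_zero (mul_ne_zero hx₀.1 (h1y0 y hy)) (inv_ne_zero hs0)) ?_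
      (by rw [heq]; exact hprod)
    rw [hv.map_mul _ _ (mul_ne_zero hx₀.1 (h1y0 y hy)) (inv_ne_zero hs0),
      hv.map_mul _ _ hx₀.1 (h1y0 y hy), v_inv hv hs0, hx₀.2.1, (h1yU y hy).2.1, hvs]
    ring
  have hstep : ∑ s ∈ S.filter (fun s => InU v (a - m) (s * x₀⁻¹)), (χ s)⁻¹ * ψ (s / c)
      = ∑ y ∈ Y, ((χ x₀)⁻¹ * ψ (x₀ / c)) * ψ ((x₀ - 1) / c * y) := by
    refine Finset.sum_bij' (fun s hs => (hY.2 (s * x₀⁻¹ - 1) (pf1 s hs)).choose)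
      (fun y hy => (hS.2 (x₀ * (1 + y)) (hx₀y y hy)).choose) ?_ ?_ ?_ ?_ ?_
    · intro s hs
      exact (hY.2 (s * x₀⁻¹ - 1) (pf1 s hs)).choose_spec.1.1
    · -- j maps into the fiber
      intro y hy
      have spec := (hS.2 (x₀ * (1 + y)) (hx₀y y hy)).choose_spec
      set t := (hS.2 (x₀ * (1 + y)) (hx₀y y hy)).choose with hts
      have ht0 : t ≠ 0 := (hS.1 t spec.1.1).1
      refine Finset.mem_filter.mpr ⟨spec.1.1, ?_⟩
      have h2 : InU v a (t * (x₀ * (1 + y))⁻¹) := InU_symm hv ht0 spec.1.2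
      have h3 : InU v (a - m) (t * (x₀ * (1 + y))⁻¹) := InU_mono hv (by omega) h2
      have h4 := InU_mul hv h3 (h1yU y hy)
      have heq : t * (x₀ * (1 + y))⁻¹ * (1 + y) = t * x₀⁻¹ := by
        rw [mul_inv]
        field_simp [hx₀.1, h1y0 y hy]
      rwa [heq] at h4
    · -- left inverse
      intro s hs
      have spec1 := (hY.2 (s * x₀⁻¹ - 1) (pf1 s hs)).choose_spec
      set y := (hY.2 (s * x₀⁻¹ - 1) (pf1 s hs)).choose with hys
      have hyY : y ∈ Y := spec1.1.1
      have hU : InU v a (x₀ * (1 + y) * s⁻¹) := key s hs y hyY spec1.1.2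
      exact ((hS.2 (x₀ * (1 + y)) (hx₀y y hyY)).choose_spec.2 s
        ⟨(Finset.mem_filter.mp hs).1, hU⟩).symm
    · -- right inverse
      intro y hy
      have spec2 := (hS.2 (x₀ * (1 + y)) (hx₀y y hy)).choose_spec
      set t := (hS.2 (x₀ * (1 + y)) (hx₀y y hy)).choose with hts
      have htS : t ∈ S := spec2.1.1
      have ht0 : t ≠ 0 := (hS.1 t htS).1
      have htP : InP v (a : ℤ) (x₀ * (1 + y) * t⁻¹ - 1) := InU_sub_one hv spec2.1.2
      have heq : t * x₀⁻¹ - 1 - y = -((t * x₀⁻¹) * (x₀ * (1 + y) * t⁻¹ - 1)) := by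
        field_simp [hx₀.1, ht0]
        ring
      have hx₀t : InP v 0 (t * x₀⁻¹) := InP_of_le (mul_ne_zero ht0 (inv_ne_zero hx₀.1))
        (le_of_eq (by rw [hv.map_mul _ _ ht0 (inv_ne_zero hx₀.1), v_inv hv hx₀.1,
          hx₀.2.1, (hS.1 t htS).2.1]; ring))
      have hprod := InP_neg hv (InP_mul hv hx₀t htP)
      rw [zero_add] at hprod
      have hfib : t ∈ S.filter (fun s => InU v (a - m) (s * x₀⁻¹)) := by
        refine Finset.mem_filter.mpr ⟨htS, ?_⟩
        have h2 : InU v a (t * (x₀ * (1 + y))⁻¹) := InU_symm hv ht0 spec2.1.2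
        have h3 : InU v (a - m) (t * (x₀ * (1 + y))⁻¹) := InU_mono hv (by omega) h2
        have h4 := InU_mul hv h3 (h1yU y hy)
        have heq2 : t * (x₀ * (1 + y))⁻¹ * (1 + y) = t * x₀⁻¹ := by
          rw [mul_inv]; field_simp [hx₀.1, h1y0 y hy]
        rwa [heq2] at h4
      exact ((hY.2 (t * x₀⁻¹ - 1) (pf1 t hfib)).choose_spec.2 y
        ⟨hy, by rw [heq]; exact hprod⟩).symm
    · -- summand equality
      intro s hs
      show (χ s)⁻¹ * ψ (s / c) = ((χ x₀)⁻¹ * ψ (x₀ / c)) *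
        ψ ((x₀ - 1) / c * (hY.2 (s * x₀⁻¹ - 1) (pf1 s hs)).choose)
      have spec1 := (hY.2 (s * x₀⁻¹ - 1) (pf1 s hs)).choose_spec
      set y := (hY.2 (s * x₀⁻¹ - 1) (pf1 s hs)).choose with hys
      have hyY : y ∈ Y := spec1.1.1
      have hU : InU v a (x₀ * (1 + y) * s⁻¹) := key s hs y hyY spec1.1.2
      have hs0 : s ≠ 0 := (hS.1 s (Finset.mem_filter.mp hs).1).1
      have hu : InU v a (s * (x₀ * (1 + y))⁻¹) := InU_symm hv hs0 hU
      have hxy0 : x₀ * (1 + y) ≠ 0 := mul_ne_zero hx₀.1 (h1y0 y hyY)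
      have heq : x₀ * (1 + y) * (s * (x₀ * (1 + y))⁻¹) = s := by
        field_simp [hxy0]
        exact div_self hxy0
      have h5 := f_inv_a hv hχ hψ hψc hc0 hvc (x₀ * (1 + y)) (s * (x₀ * (1 + y))⁻¹)
        (hx₀y y hyY) hu
      rw [heq] at h5
      rw [h5]
      exact f_expand hv hχ ha hm hψ hc0 hcchar x₀ hx₀ y (hY.1 y hyY)
  rw [hstep, ← Finset.mul_sum]
  constructor
  · intro hcase
    have hone : ∀ y ∈ Y, ψ ((x₀ - 1) / c * y) = 1 := by
      intro y hy
      apply hψc.1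
      have h1 := InP_mul hv (InP_mul hv hcase (InP_c_inv hv hc0 hvc)) (hY.1 y hy)
      have h2 : ((m : ℤ) + (-(a : ℤ) - n)) + ((a : ℤ) - m) = -n := by ring
      rw [h2] at h1
      rw [div_eq_mul_inv]
      exact h1
    rw [Finset.sum_congr rfl hone, Finset.sum_const, hYcard, nsmul_eq_mul, mul_one]
    push_cast
    ring
  · intro hcase
    have hx₀1 : x₀ - 1 ≠ 0 := fun h0 => hcase (Or.inl h0)
    have hvx₀1 : 0 ≤ v (x₀ - 1) := by
      have h6 := InU_sub_one hv hx₀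
      rcases h6 with h | h
      · exact absurd h hx₀1
      · simpa using h
    have hvx₀m : v (x₀ - 1) < m := by
      by_contra h; push_neg at h; exact hcase (Or.inr h)
    set lam := (x₀ - 1) / c with hlam
    have hlam0 : lam ≠ 0 := div_ne_zero hx₀1 hc0
    have hvlam : v lam = v (x₀ - 1) - ((a : ℤ) + n) := by
      rw [hlam, div_eq_mul_inv, hv.map_mul _ _ hx₀1 (inv_ne_zero hc0), v_inv hv hc0, hvc]
      ring
    obtain ⟨w, hwP, hwne⟩ := hψc.2
    have hw0 : w ≠ 0 := fun h0 => hwne (by rw [h0, hψ.map_zero])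
    have hvw : -n - 1 ≤ v w := hwP.resolve_left hw0
    set y₀ := w / lam with hy₀
    have hy₀P : InP v ((a : ℤ) - m) y₀ := by
      refine InP_of_le (div_ne_zero hw0 hlam0) ?_
      rw [hy₀, div_eq_mul_inv, hv.map_mul _ _ hw0 (inv_ne_zero hlam0), v_inv hv hlam0, hvlam]
      omega
    have hwlam : lam * y₀ = w := by rw [hy₀]; field_simp
    have hg : ∀ y d : F, InP v ((a : ℤ) - m) y → InP v (a : ℤ) d →
        ψ (lam * (y + d)) = ψ (lam * y) := by
      intro y d hyP hdP
      rw [mul_add, hψ.map_add]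
      have h2 := InP_mul hv (InP_of_le hlam0 (le_of_eq hvlam.symm)) hdP
      have h1 : InP v (-n) (lam * d) := InP_mono (by omega) h2
      rw [hψc.1 _ h1, mul_one]
    classical
    have htr := sum_addReps_eq hv hY (IsAddReps.translate hv hY hy₀P) (fun y => ψ (lam * y)) hg
    rw [Finset.sum_image (fun x _ y _ h => by simpa using h)] at htr
    have h3 : ∑ y ∈ Y, ψ (lam * (y + y₀)) = ψ w * ∑ y ∈ Y, ψ (lam * y) := by
      rw [Finset.mul_sum]
      refine Finset.sum_congr rfl fun y hy => ?_
      rw [mul_add, hψ.map_add, hwlam]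
      ring
    have hself : ∑ y ∈ Y, ψ (lam * y) = ψ w * ∑ y ∈ Y, ψ (lam * y) := by
      rw [htr] at h3 ⊢
      exact h3
    have h4 : (ψ w - 1) * ∑ y ∈ Y, ψ (lam * y) = 0 := by linear_combination -hself
    have hzero : ∑ y ∈ Y, ψ (lam * y) = 0 := by
      rcases mul_eq_zero.mp h4 with h | h
      · exact absurd (by linear_combination h) hwne
      · exact h
    have hfin : ∑ y ∈ Y, ψ (lam * y) = ∑ y ∈ Y, ψ ((x₀ - 1) / c * y) := by
      rw [hlam]
    rw [← hfin, hzero, mul_zero]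

end main2
end GaussAux
/-- Under the Lamprecht–Tate hypothesis on `c`, the Gauss sum over
`U_F/U_F^a` collapses: `Σ_{x ∈ U_F/U_F^a} χ(x)⁻¹ ψ(x/c) = q_F^m · Σ_{z ∈ U_F^m/U_F^{a-m}}
χ(z)⁻¹ ψ(z/c)`, for any sets of coset representatives. -/
theorem gauss_sum_collapse
    {F : Type*} [Field F] [CharZero F]
    (vF : F → ℤ) (hvF : IsDiscreteVal vF)
    (q : ℕ) (hq : IsResidueCard vF q)
    (χ : F → ℂ) (a : ℕ) (hχ : IsMulCharCond vF χ a) (ha : 1 ≤ a)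
    (m : ℕ) (hm : 2 * m ≤ a)
    (ψ : F → ℂ) (hψ : IsAddChar ψ) (n : ℤ) (hψcond : AddCondEq vF ψ n)
    (c : F) (hc0 : c ≠ 0) (hvc : vF c = (a : ℤ) + n)
    (hcchar : ∀ y : F, InP vF ((a : ℤ) - m) y → χ (1 + y) = ψ (y / c)) :
    ∀ S T : Finset F, IsMulReps vF 0 a S → IsMulReps vF m (a - m) T →
      ∑ x ∈ S, (χ x)⁻¹ * ψ (x / c) = (q : ℂ) ^ m * ∑ z ∈ T, (χ z)⁻¹ * ψ (z / c) := by
  intro S T hS hT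
  classical
  have hfib := fun (x₀ : F) (hx₀ : InU vF 0 x₀) =>
    GaussAux.fiber_sum hvF hq hχ ha hm hψ hψcond hc0 hvc hcchar hS x₀ hx₀
  set P : F → Prop := fun s => ∃ t ∈ T, InU vF (a - m) (s * t⁻¹) with hPdef
  have hB : ∑ s ∈ S.filter P, (χ s)⁻¹ * ψ (s / c)
      = (q : ℂ) ^ m * ∑ t ∈ T, (χ t)⁻¹ * ψ (t / c) := by
    have hunion : S.filter P
        = T.biUnion (fun t => S.filter (fun s => InU vF (a - m) (s * t⁻¹))) := by
      ext s
      simp only [Finset.mem_filter, Finset.mem_biUnion, hPdef]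
      constructor
      · rintro ⟨hsS, t, htT, h⟩; exact ⟨t, htT, hsS, h⟩
      · rintro ⟨t, htT, hsS, h⟩; exact ⟨hsS, t, htT, h⟩
    have hdisj : (T : Set F).PairwiseDisjoint
        (fun t => S.filter (fun s => InU vF (a - m) (s * t⁻¹))) := by
      intro t1 ht1 t2 ht2 hne
      refine Finset.disjoint_left.mpr fun s hs1 hs2 => hne ?_
      rw [Finset.mem_filter] at hs1 hs2
      have hs0 : s ≠ 0 := (hS.1 s hs1.1).1
      have ht20 : t2 ≠ 0 := (hT.1 t2 (Finset.mem_coe.mp ht2)).1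
      have ht10 : t1 ≠ 0 := (hT.1 t1 (Finset.mem_coe.mp ht1)).1
      have htrans : InU vF (a - m) (t1 * t2⁻¹) :=
        GaussAux.InU_trans hvF ht20 (GaussAux.InU_symm hvF ht10 hs1.2) hs2.2
      exact (hT.2 t1 (hT.1 t1 (Finset.mem_coe.mp ht1))).unique
        ⟨Finset.mem_coe.mp ht1, by rw [mul_inv_cancel₀ ht10]; exact GaussAux.InU_one hvF _⟩
        ⟨Finset.mem_coe.mp ht2, htrans⟩
    rw [hunion, Finset.sum_biUnion hdisj, Finset.mul_sum]
    refine Finset.sum_congr rfl fun t htT => ?_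
    have htU : InU vF m t := hT.1 t htT
    have ht0 : InU vF 0 t := GaussAux.InU_mono hvF (Nat.zero_le m) htU
    exact (hfib t ht0).1 (GaussAux.InU_sub_one hvF htU)
  have hA : ∑ s ∈ S.filter (fun s => ¬ P s), (χ s)⁻¹ * ψ (s / c) = 0 := by
    set S₀ := S.filter (fun s => ¬ P s) with hS₀
    suffices h : ∀ N : ℕ, ∀ A : Finset F, A ⊆ S₀ → A.card ≤ N →
        (∀ s ∈ A, ∀ s' ∈ S, InU vF (a - m) (s' * s⁻¹) → s' ∈ A) →
        ∑ s ∈ A, (χ s)⁻¹ * ψ (s / c) = 0 by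
      refine h S₀.card S₀ le_rfl le_rfl ?_
      intro s hs s' hs' hrel
      rw [hS₀, Finset.mem_filter] at hs ⊢
      refine ⟨hs', ?_⟩
      rintro ⟨t, htT, hrel'⟩
      exact hs.2 ⟨t, htT, GaussAux.InU_trans hvF (hT.1 t htT).1
        (GaussAux.InU_symm hvF (hS.1 s hs.1).1 hrel) hrel'⟩
    intro N
    induction N with
    | zero =>
        intro A hsub hcard hsat
        have hA0 : A = ∅ := Finset.card_eq_zero.mp (le_antisymm hcard (Nat.zero_le _))
        simp [hA0]
    | succ N ih =>
        intro A hsub hcard hsat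
        rcases A.eq_empty_or_nonempty with rfl | ⟨s, hsA⟩
        · simp
        have hsS₀ := hsub hsA
        rw [hS₀, Finset.mem_filter] at hsS₀
        have hsS : s ∈ S := hsS₀.1
        have hs0 : InU vF 0 s := hS.1 s hsS
        set Fib := S.filter (fun s' => InU vF (a - m) (s' * s⁻¹)) with hFib
        have hFibA : Fib ⊆ A := by
          intro s' hs'
          rw [hFib, Finset.mem_filter] at hs'
          exact hsat s hsA s' hs'.1 hs'.2
        have hnotP : ¬ InP vF (m : ℤ) (s - 1) := by
          intro hPm
          have hsU : InU vF m s := GaussAux.InU_of hs0.1 hs0.2.1 hPm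
          obtain ⟨t, ⟨htT, hrel⟩, -⟩ := hT.2 s hsU
          exact hsS₀.2 ⟨t, htT, hrel⟩
        have hFib0 : ∑ s' ∈ Fib, (χ s')⁻¹ * ψ (s' / c) = 0 := (hfib s hs0).2 hnotP
        have hsFib : s ∈ Fib := Finset.mem_filter.mpr
          ⟨hsS, by rw [mul_inv_cancel₀ hs0.1]; exact GaussAux.InU_one hvF _⟩
        have hsum := Finset.sum_sdiff (f := fun s => (χ s)⁻¹ * ψ (s / c)) hFibA
        have hrest : ∑ s' ∈ A \ Fib, (χ s')⁻¹ * ψ (s' / c) = 0 := by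
          refine ih (A \ Fib) (le_trans (Finset.sdiff_subset) hsub) ?_ ?_
          · have hlt : (A \ Fib).card < A.card :=
              Finset.card_lt_card (Finset.sdiff_ssubset hFibA ⟨s, hsFib⟩)
            omega
          · intro s' hs' s'' hs''S hrel
            rw [Finset.mem_sdiff] at hs' ⊢
            have hs'0 : s' ≠ 0 := (hS.1 s' (hsub hs'.1 |> fun h =>
              (Finset.mem_filter.mp h).1)).1
            refine ⟨hsat s' hs'.1 s'' hs''S hrel, ?_⟩
            intro h2
            apply hs'.2
            rw [hFib, Finset.mem_filter] at h2 ⊢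
            refine ⟨(Finset.mem_filter.mp (hsub hs'.1)).1, ?_⟩
            exact GaussAux.InU_trans hvF hs0.1 (GaussAux.InU_symm hvF hs'0 hrel) h2.2
        calc ∑ s' ∈ A, (χ s')⁻¹ * ψ (s' / c)
            = (∑ s' ∈ A \ Fib, (χ s')⁻¹ * ψ (s' / c))
              + ∑ s' ∈ Fib, (χ s')⁻¹ * ψ (s' / c) := hsum.symm
          _ = 0 := by rw [hFib0, hrest, add_zero]
  calc ∑ x ∈ S, (χ x)⁻¹ * ψ (x / c)
      = (∑ s ∈ S.filter P, (χ s)⁻¹ * ψ (s / c))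
        + ∑ s ∈ S.filter (fun s => ¬ P s), (χ s)⁻¹ * ψ (s / c) :=
        (Finset.sum_filter_add_sum_filter_not S P _).symm
    _ = (q : ℂ) ^ m * ∑ z ∈ T, (χ z)⁻¹ * ψ (z / c) := by rw [hB, hA, add_zero]
end
end
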